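/- For every t ∈ ℝ, writing g1 = g1h(t) and G1 = G1h(t), the following identities hold: (i) √(1 − G1²/L1²) = √(2/3)·(Γ/(L1·χ))·√((1 − (5/3)·(1+χ²)·cos² g1)/(1 − (5/3)·cos² g1)); (ii) Γ/G1 = √(3/5)·√(1 − (5/3)·cos² g1)/sin g1; (iii) √(1 − Γ²/G1²) = √(2/5)/sin g1. (These express the inner eccentricity e1 = √(1 − G1²/L1²), cos i = Γ/G1 and sin i of the first-order mutual inclination along the separatrix.) -/

import Mathlib

/-- `χ = √(2/3)·(Γ/L1)/√(1 − (5/3)·Γ²/L1²)`. -/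
noncomputable def chi (L1 Γ : ℝ) : ℝ :=
  Real.sqrt (2 / 3) * (Γ / L1) / Real.sqrt (1 - (5 / 3) * Γ ^ 2 / L1 ^ 2)

/-- The `g1`-component of the separatrix. -/
noncomputable def g1h (L1 Γ A2 t : ℝ) : ℝ :=
  Real.arccos (-(Real.sqrt (3 / 5)) * Real.sinh (A2 * t) /
    Real.sqrt ((chi L1 Γ) ^ 2 + (1 + (chi L1 Γ) ^ 2) * Real.sinh (A2 * t) ^ 2))

/-- The `G1`-component of the separatrix. -/
noncomputable def G1h (L1 Γ A2 t : ℝ) : ℝ :=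
  Γ * Real.sqrt (5 / 3) * Real.sqrt (1 + (3 / 5) * (L1 ^ 2 / Γ ^ 2) * Real.sinh (A2 * t) ^ 2) /
    Real.cosh (A2 * t)

lemma sqrt_aux (a b : ℝ) (ha : 0 ≤ a) (hb : 0 ≤ b) (h : a ^ 2 = b ^ 2) : a = b := by
  rw [← Real.sqrt_sq ha, ← Real.sqrt_sq hb, h]

set_option maxHeartbeats 2000000 in
theorem identities_over_separatrix (L1 Γ A2 : ℝ) (hL1 : 0 < L1) (hΓpos : 0 < Γ)
    (hΓ : Γ < L1 * Real.sqrt (3 / 5)) (hA2 : 0 < A2) :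
    ∀ t : ℝ,
      Real.sqrt (1 - (G1h L1 Γ A2 t) ^ 2 / L1 ^ 2)
        = Real.sqrt (2 / 3) * (Γ / (L1 * chi L1 Γ)) *
          Real.sqrt ((1 - (5 / 3) * (1 + (chi L1 Γ) ^ 2) * Real.cos (g1h L1 Γ A2 t) ^ 2) /
            (1 - (5 / 3) * Real.cos (g1h L1 Γ A2 t) ^ 2)) ∧
      Γ / G1h L1 Γ A2 t
        = Real.sqrt (3 / 5) * Real.sqrt (1 - (5 / 3) * Real.cos (g1h L1 Γ A2 t) ^ 2) /
          Real.sin (g1h L1 Γ A2 t) ∧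
      Real.sqrt (1 - Γ ^ 2 / (G1h L1 Γ A2 t) ^ 2)
        = Real.sqrt (2 / 5) / Real.sin (g1h L1 Γ A2 t) := by
  intro t
  have h35 : Real.sqrt (3 / 5) ^ 2 = 3 / 5 := Real.sq_sqrt (by norm_num)
  have h23 : Real.sqrt (2 / 3) ^ 2 = 2 / 3 := Real.sq_sqrt (by norm_num)
  have h25 : Real.sqrt (2 / 5) ^ 2 = 2 / 5 := Real.sq_sqrt (by norm_num)
  have hL1' : L1 ≠ 0 := ne_of_gt hL1
  have hΓ' : Γ ≠ 0 := ne_of_gt hΓpos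
  have hΓsq : Γ ^ 2 < 3 / 5 * L1 ^ 2 := by
    nlinarith [h35, Real.sqrt_nonneg (3/5 : ℝ),
      mul_pos hL1 (Real.sqrt_pos.2 (show (0:ℝ) < 3/5 by norm_num))]
  have hd : (0:ℝ) < 1 - 5 / 3 * Γ ^ 2 / L1 ^ 2 := by
    rw [sub_pos, div_lt_one (by positivity)]
    nlinarith
  set χ := chi L1 Γ with hχdef
  have hχpos : 0 < χ :=
    div_pos (mul_pos (Real.sqrt_pos.2 (by norm_num)) (div_pos hΓpos hL1)) (Real.sqrt_pos.2 hd)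
  have hden : (0:ℝ) < 3 * L1 ^ 2 - 5 * Γ ^ 2 := by nlinarith
  have hkey : χ ^ 2 * (3 * L1 ^ 2 - 5 * Γ ^ 2) = 2 * Γ ^ 2 := by
    rw [hχdef]
    unfold chi
    rw [div_pow, mul_pow, h23, Real.sq_sqrt hd.le, div_pow]
    field_simp
    exact div_self (ne_of_gt (by linarith))
  have hχ2pos : 0 < χ ^ 2 := pow_pos hχpos 2
  set s := Real.sinh (A2 * t) with hs
  set c := Real.cosh (A2 * t) with hcdef
  have hc : 0 < c := Real.cosh_pos _
  have hcs : c ^ 2 = 1 + s ^ 2 := by rw [hcdef, hs, Real.cosh_sq]; ring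
  have hD : (0:ℝ) < χ ^ 2 + (1 + χ ^ 2) * s ^ 2 :=
    add_pos_of_pos_of_nonneg hχ2pos (mul_nonneg (by linarith) (sq_nonneg s))
  set a := -Real.sqrt (3 / 5) * s / Real.sqrt (χ ^ 2 + (1 + χ ^ 2) * s ^ 2) with ha
  have harg : a ^ 2 = 3 / 5 * s ^ 2 / (χ ^ 2 + (1 + χ ^ 2) * s ^ 2) := by
    rw [ha, div_pow, mul_pow, neg_pow, Real.sq_sqrt hD.le, h35]
    ring_nf
  have ha2lt : a ^ 2 < 1 := by
    rw [harg, div_lt_one hD]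
    have h5 : (0:ℝ) ≤ 2/5 * s ^ 2 := by positivity
    linarith [mul_nonneg hχ2pos.le (sq_nonneg s)]
  have h1 : -1 ≤ a := by linarith [sq_nonneg (a + 1), ha2lt]
  have h2 : a ≤ 1 := by linarith [sq_nonneg (a - 1), ha2lt]
  have hg : g1h L1 Γ A2 t = Real.arccos a := by
    unfold g1h
    rw [← hχdef, ← hs, ← ha]
  have hcos : Real.cos (g1h L1 Γ A2 t) = a := by rw [hg, Real.cos_arccos h1 h2]
  have hsin : Real.sin (g1h L1 Γ A2 t) = Real.sqrt (1 - a ^ 2) := by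
    rw [hg, Real.sin_arccos]
  have hsinpos : 0 < Real.sin (g1h L1 Γ A2 t) := by
    rw [hsin]; exact Real.sqrt_pos.2 (by linarith)
  have hsinsq : Real.sin (g1h L1 Γ A2 t) ^ 2 = 1 - 3 / 5 * s ^ 2 / (χ ^ 2 + (1 + χ ^ 2) * s ^ 2) := by
    rw [hsin, Real.sq_sqrt (by linarith), harg]
  have hcossq : Real.cos (g1h L1 Γ A2 t) ^ 2 = 3 / 5 * s ^ 2 / (χ ^ 2 + (1 + χ ^ 2) * s ^ 2) := by
    rw [hcos, harg]
  have hGsq : (G1h L1 Γ A2 t) ^ 2 = (5 * Γ ^ 2 + 3 * L1 ^ 2 * s ^ 2) / (3 * c ^ 2) := by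
    unfold G1h
    rw [← hs, ← hcdef, div_pow, mul_pow, mul_pow,
      Real.sq_sqrt (show (0:ℝ) ≤ 5/3 by norm_num), Real.sq_sqrt (by positivity)]
    field_simp
  have hGpos : 0 < G1h L1 Γ A2 t := by
    unfold G1h
    rw [← hs, ← hcdef]
    exact div_pos (mul_pos (mul_pos hΓpos (Real.sqrt_pos.2 (by norm_num)))
      (Real.sqrt_pos.2 (by positivity))) hc
  have hGne : G1h L1 Γ A2 t ≠ 0 := ne_of_gt hGpos
  have hNum : (0:ℝ) < 5 * Γ ^ 2 + 3 * L1 ^ 2 * s ^ 2 := by positivity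
  have hB : 1 - 5 / 3 * Real.cos (g1h L1 Γ A2 t) ^ 2
      = χ ^ 2 * c ^ 2 / (χ ^ 2 + (1 + χ ^ 2) * s ^ 2) := by
    rw [hcossq, hcs]
    field_simp
    ring
  have hA : 1 - 5 / 3 * (1 + χ ^ 2) * Real.cos (g1h L1 Γ A2 t) ^ 2
      = χ ^ 2 / (χ ^ 2 + (1 + χ ^ 2) * s ^ 2) := by
    rw [hcossq]
    field_simp
    ring
  have hsinsq' : Real.sin (g1h L1 Γ A2 t) ^ 2
      = (χ ^ 2 + (χ ^ 2 + 2 / 5) * s ^ 2) / (χ ^ 2 + (1 + χ ^ 2) * s ^ 2) := by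
    rw [hsinsq]
    field_simp
    ring
  have hNpos : (0:ℝ) < χ ^ 2 + (χ ^ 2 + 2 / 5) * s ^ 2 :=
    add_pos_of_pos_of_nonneg hχ2pos (mul_nonneg (by linarith) (sq_nonneg s))
  refine ⟨?_, ?_, ?_⟩
  · -- identity (i)
    have hLarg : 1 - (G1h L1 Γ A2 t) ^ 2 / L1 ^ 2
        = (3 * L1 ^ 2 - 5 * Γ ^ 2) / (3 * L1 ^ 2 * c ^ 2) := by
      rw [hGsq, hcs]
      field_simp
      ring
    rw [hLarg, hA, hB]
    have hratio : χ ^ 2 / (χ ^ 2 + (1 + χ ^ 2) * s ^ 2)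
        / (χ ^ 2 * c ^ 2 / (χ ^ 2 + (1 + χ ^ 2) * s ^ 2)) = 1 / c ^ 2 := by
      field_simp
    rw [hratio]
    apply sqrt_aux
    · exact Real.sqrt_nonneg _
    · positivity
    · rw [Real.sq_sqrt (by positivity), mul_pow, mul_pow, h23,
        Real.sq_sqrt (by positivity), div_pow, mul_pow]
      field_simp
      linear_combination (1) * hkey
  · -- identity (ii)
    rw [hB]
    apply sqrt_aux
    · exact (div_pos hΓpos hGpos).le
    · exact div_nonneg (mul_nonneg (Real.sqrt_nonneg _) (Real.sqrt_nonneg _)) hsinpos.le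
    · rw [div_pow, div_pow, mul_pow, h35, Real.sq_sqrt (by positivity), hGsq, hsinsq']
      field_simp
      linear_combination (-s ^ 2) * hkey
  · -- identity (iii)
    have hLarg : 1 - Γ ^ 2 / (G1h L1 Γ A2 t) ^ 2
        = (2 * Γ ^ 2 + 3 * (L1 ^ 2 - Γ ^ 2) * s ^ 2) / (5 * Γ ^ 2 + 3 * L1 ^ 2 * s ^ 2) := by
      rw [hGsq, hcs]
      field_simp
      ring
    rw [hLarg]
    apply sqrt_aux
    · exact Real.sqrt_nonneg _
    · exact div_nonneg (Real.sqrt_nonneg _) hsinpos.le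
    · have hM : (0:ℝ) ≤ (2 * Γ ^ 2 + 3 * (L1 ^ 2 - Γ ^ 2) * s ^ 2) / (5 * Γ ^ 2 + 3 * L1 ^ 2 * s ^ 2) :=
        div_nonneg (add_nonneg (by positivity)
          (mul_nonneg (by linarith [sq_nonneg L1]) (sq_nonneg s))) hNum.le
      rw [Real.sq_sqrt hM, div_pow, h25, hsinsq']
      field_simp
      linear_combination (3 * s ^ 2 * (1 + s ^ 2)) * hkey
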